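/- The quasilinear wave equation ∑_{α,β=0}^2 g^{αβ}(∂φ)∂²_{αβ}φ = 0 with g^{00}=−1, g^{0i}=−∂_iφ, g^{ij}=(1+2∂_tφ+|∇φ|²)δ_{ij}−∂_iφ∂_jφ, when expanded as −∂_t²φ+Δφ + ∑c^{αβ,γ}∂_γφ∂²_{αβ}φ + ∑c^{αβ,γν}∂_γφ∂_νφ∂²_{αβ}φ = 0, satisfies both the first and second null conditions: ∑ c^{αβ,γ}ω_αω_βω_γ = 0 and ∑ c^{αβ,γν}ω_αω_βω_γω_ν = 0 for all ω_0=−1, (ω_1,ω_2)∈S¹. -/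

import Mathlib

/-!
Both null forms vanish on every covector `ω`, not only on null ones: the quadratic form is
`2 ω₀ |ω'|² - 2 ω₀ |ω'|²` and the cubic one is `|ω'|⁴ - |ω'|⁴`, where `ω' = (ω₁, ω₂)`.
-/

/-- Quadratic coefficients `c^{αβ,γ}` of the expansion of the 2D Chaplygin
potential equation around the flat wave operator. -/
noncomputable def c2 (α β γ : Fin 3) : ℝ :=
  (if α = 0 ∧ β ≠ 0 ∧ γ = β then (-1 : ℝ) else 0) +
  (if β = 0 ∧ α ≠ 0 ∧ γ = α then (-1 : ℝ) else 0) +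
  (if α = β ∧ α ≠ 0 ∧ γ = 0 then (2 : ℝ) else 0)

/-- Cubic coefficients `c^{αβ,γν}` of the expansion of the 2D Chaplygin
potential equation around the flat wave operator. -/
noncomputable def c3 (α β γ δ : Fin 3) : ℝ :=
  (if α ≠ 0 ∧ β ≠ 0 ∧ γ = α ∧ δ = β then (-1 : ℝ) else 0) +
  (if α = β ∧ α ≠ 0 ∧ γ = δ ∧ γ ≠ 0 then (1 : ℝ) else 0)

open Matrix

theorem sum_c2_mul (p : Fin 3 → ℝ) (h : Matrix (Fin 3) (Fin 3) ℝ) :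
    ∑ α, ∑ β, ∑ γ, c2 α β γ * p γ * h α β =
      2 * p 0 * (h 1 1 + h 2 2) - p 1 * (h 0 1 + h 1 0) - p 2 * (h 0 2 + h 2 0) := by
  simp only [c2, Fin.sum_univ_three]
  norm_num [Fin.ext_iff]
  ring

theorem sum_c3_mul (p : Fin 3 → ℝ) (h : Matrix (Fin 3) (Fin 3) ℝ) :
    ∑ α, ∑ β, ∑ γ, ∑ δ, c3 α β γ δ * p γ * p δ * h α β =
      (p 1 ^ 2 + p 2 ^ 2) * (h 1 1 + h 2 2) -
        (p 1 ^ 2 * h 1 1 + p 1 * p 2 * (h 1 2 + h 2 1) + p 2 ^ 2 * h 2 2) := by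
  simp only [c3, Fin.sum_univ_three]
  norm_num [Fin.ext_iff]
  ring

theorem sum_c2_mul_self_eq_zero (ω : Fin 3 → ℝ) :
    ∑ α, ∑ β, ∑ γ, c2 α β γ * ω α * ω β * ω γ = 0 := by
  have := sum_c2_mul ω (vecMulVec ω ω)
  simp only [vecMulVec_apply] at this
  calc _ = ∑ α, ∑ β, ∑ γ, c2 α β γ * ω γ * (ω α * ω β) := by simp only [mul_comm, mul_left_comm]
    _ = 0 := by rw [this]; ring

theorem sum_c3_mul_self_eq_zero (ω : Fin 3 → ℝ) :
    ∑ α, ∑ β, ∑ γ, ∑ δ, c3 α β γ δ * ω α * ω β * ω γ * ω δ = 0 := by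
  have := sum_c3_mul ω (vecMulVec ω ω)
  simp only [vecMulVec_apply] at this
  calc _ = ∑ α, ∑ β, ∑ γ, ∑ δ, c3 α β γ δ * ω γ * ω δ * (ω α * ω β) := by
        simp only [mul_comm, mul_left_comm]
    _ = 0 := by rw [this]; ring

/-- The 2D Chaplygin potential equation `∑ g^{αβ}(∂φ)∂²_{αβ}φ = 0` expands as
`−∂_t²φ + Δφ + ∑ c^{αβ,γ}∂_γφ ∂²_{αβ}φ + ∑ c^{αβ,γν}∂_γφ∂_νφ ∂²_{αβ}φ`, and the
coefficients satisfy both the first and the second null conditions. -/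
theorem stmt12 :
    (∀ (p : Fin 3 → ℝ) (h : Matrix (Fin 3) (Fin 3) ℝ), h.IsSymm →
      (let cc := 1 + 2 * p 0 + (p 1) ^ 2 + (p 2) ^ 2
       let gi : Matrix (Fin 3) (Fin 3) ℝ :=
         !![-1, -p 1, -p 2;
            -p 1, cc - (p 1) ^ 2, -(p 1 * p 2);
            -p 2, -(p 1 * p 2), cc - (p 2) ^ 2]
       ∑ α, ∑ β, gi α β * h α β =
         (-h 0 0 + h 1 1 + h 2 2) +
         (∑ α, ∑ β, ∑ γ, c2 α β γ * p γ * h α β) +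
         (∑ α, ∑ β, ∑ γ, ∑ δ, c3 α β γ δ * p γ * p δ * h α β))) ∧
    (∀ ω1 ω2 : ℝ, ω1 ^ 2 + ω2 ^ 2 = 1 →
      (∑ α, ∑ β, ∑ γ, c2 α β γ *
          (![(-1 : ℝ), ω1, ω2]) α * (![(-1 : ℝ), ω1, ω2]) β *
          (![(-1 : ℝ), ω1, ω2]) γ = 0) ∧
      (∑ α, ∑ β, ∑ γ, ∑ δ, c3 α β γ δ *
          (![(-1 : ℝ), ω1, ω2]) α * (![(-1 : ℝ), ω1, ω2]) β *
          (![(-1 : ℝ), ω1, ω2]) γ * (![(-1 : ℝ), ω1, ω2]) δ = 0)) := by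
  refine ⟨fun p h _ => ?_, fun ω1 ω2 _ =>
    ⟨sum_c2_mul_self_eq_zero _, sum_c3_mul_self_eq_zero _⟩⟩
  rw [sum_c2_mul, sum_c3_mul]
  simp only [Fin.sum_univ_three, of_apply, cons_val_zero, cons_val_one, cons_val_two, head_cons,
    tail_cons]
  ring
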